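/- Bounded client drift over local steps: suppose each client k performs i − i₀ < I local SGD steps from a common point w̄^{i₀} = w_k^{i₀} with stochastic gradients of squared norm bounded in expectation by H², using non-increasing step sizes with η_{i₀} ≤ 2η_i. Then the expected weighted divergence satisfies E[Σ_k s_k ‖w̄^i − w_k^i‖²] ≤ 4 η_i² (I−1)² H², where w̄^i = Σ_k s_k w_k^i and Σ_k s_k = 1, s_k ≥ 0. -/

import Mathlib

open Finset

/-!
Since all clients start from the same point, `w̄^i - w_k^i = u_k - ū` where
`u_k = ∑_{i₀ ≤ j < i} η_j g_k^j` is the total displacement of client `k` and `ū` its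
`s`-weighted mean. The weighted variance of the `u_k` is at most their weighted second
moment, and by Cauchy–Schwarz over the fewer than `I` local steps, each of step size at most
`2 η_i`, `‖u_k‖² ≤ (I - 1) (2 η_i)² ∑_j ‖g_k^j‖²`. Taking expectations, each of the at most
`I - 1` gradient terms contributes `H²`.
-/

theorem norm_sum_sq_le_card_mul_sum_norm_sq {ι E : Type*} [SeminormedAddCommGroup E]
    (T : Finset ι) (f : ι → E) :
    ‖∑ j ∈ T, f j‖ ^ 2 ≤ #T * ∑ j ∈ T, ‖f j‖ ^ 2 :=
  (pow_le_pow_left₀ (norm_nonneg _) (norm_sum_le _ _) 2).trans sq_sum_le_card_mul_sum_sq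

theorem norm_sum_smul_sq_le {ι 𝕜 E : Type*} [NormedField 𝕜] [SeminormedAddCommGroup E]
    [NormedSpace 𝕜 E] (T : Finset ι) (c : ι → 𝕜) (f : ι → E) {B : ℝ}
    (hc : ∀ j ∈ T, ‖c j‖ ≤ B) :
    ‖∑ j ∈ T, c j • f j‖ ^ 2 ≤ #T * B ^ 2 * ∑ j ∈ T, ‖f j‖ ^ 2 := by
  calc ‖∑ j ∈ T, c j • f j‖ ^ 2 ≤ #T * ∑ j ∈ T, ‖c j • f j‖ ^ 2 :=
        norm_sum_sq_le_card_mul_sum_norm_sq T _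
    _ ≤ #T * ∑ j ∈ T, B ^ 2 * ‖f j‖ ^ 2 := by
        gcongr with j hj
        rw [norm_smul, mul_pow]
        gcongr
        exact hc j hj
    _ = #T * B ^ 2 * ∑ j ∈ T, ‖f j‖ ^ 2 := by rw [← mul_sum, mul_assoc]

section WeightedMean

variable {ι E : Type*} [NormedAddCommGroup E] [InnerProductSpace ℝ E]
  {t : Finset ι} {s : ι → ℝ}

theorem sum_mul_norm_sub_sum_smul_sq (hs : ∑ k ∈ t, s k = 1) (v : ι → E) :
    ∑ k ∈ t, s k * ‖v k - ∑ k' ∈ t, s k' • v k'‖ ^ 2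
      = ∑ k ∈ t, s k * ‖v k‖ ^ 2 - ‖∑ k' ∈ t, s k' • v k'‖ ^ 2 := by
  set m := ∑ k' ∈ t, s k' • v k'
  have hm : ∑ k ∈ t, s k * inner ℝ (v k) m = ‖m‖ ^ 2 := by
    simp only [← real_inner_smul_left, ← sum_inner, m, real_inner_self_eq_norm_sq]
  simp only [norm_sub_sq_real, mul_add, mul_sub, sum_add_distrib, sum_sub_distrib,
    ← sum_mul, hs, mul_left_comm _ (2 : ℝ), ← mul_sum, hm]
  ring

theorem sum_mul_norm_sub_sum_smul_sq_le (hs : ∑ k ∈ t, s k = 1) (v : ι → E) :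
    ∑ k ∈ t, s k * ‖v k - ∑ k' ∈ t, s k' • v k'‖ ^ 2 ≤ ∑ k ∈ t, s k * ‖v k‖ ^ 2 := by
  rw [sum_mul_norm_sub_sum_smul_sq hs]
  exact sub_le_self _ (sq_nonneg _)

end WeightedMean

theorem sum_smul_sub_eq_sub_sum_smul {ι E : Type*} [AddCommGroup E] [Module ℝ E]
    {t : Finset ι} {s : ι → ℝ} (hs : ∑ k ∈ t, s k = 1) {w u : ι → E} {c : E}
    (hw : ∀ k, w k = c - u k) (k : ι) :
    ∑ k' ∈ t, s k' • w k' - w k = u k - ∑ k' ∈ t, s k' • u k' := by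
  simp only [hw, smul_sub, sum_sub_distrib, ← sum_smul, hs, one_smul]
  abel

theorem eq_sub_sum_Ico_of_forall_succ_eq_sub {E : Type*} [AddCommGroup E]
    {x v : ℕ → E} {a b : ℕ} (hx : ∀ j, a ≤ j → j < b → x (j + 1) = x j - v j)
    {m : ℕ} (ham : a ≤ m) (hmb : m ≤ b) :
    x m = x a - ∑ j ∈ Ico a m, v j := by
  induction m, ham using Nat.le_induction with
  | base => simp
  | succ m ham ih =>
    rw [hx m ham (by omega), ih (by omega), sum_Ico_succ_top ham, sub_sub]

theorem sum_mul_sum_mul_sum_le_card_mul {Ω ι κ : Type*} [Fintype Ω] [Fintype ι]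
    (p : Ω → ℝ) {s : ι → ℝ} (hs : ∀ k, 0 ≤ s k) (hssum : ∑ k, s k = 1) (T : Finset κ)
    (X : ι → κ → Ω → ℝ) {M : ℝ} (hX : ∀ k j, ∑ ω, p ω * X k j ω ≤ M) :
    ∑ ω, p ω * ∑ k, s k * ∑ j ∈ T, X k j ω ≤ #T * M := by
  calc ∑ ω, p ω * ∑ k, s k * ∑ j ∈ T, X k j ω
      = ∑ k, s k * ∑ j ∈ T, ∑ ω, p ω * X k j ω := by
        simp only [mul_sum]
        rw [sum_comm]
        refine sum_congr rfl fun k _ => ?_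
        rw [sum_comm]
        exact sum_congr rfl fun j _ => sum_congr rfl fun ω _ => by ring
    _ ≤ ∑ k, s k * (#T * M) := by
        gcongr with k _
        · exact hs k
        · exact (sum_le_sum fun j _ => hX k j).trans_eq (by simp)
    _ = #T * M := by rw [← sum_mul, hssum, one_mul]

theorem bounded_client_drift_general
    {d K : ℕ} {Ω : Type*} [Fintype Ω]
    (p : Ω → ℝ) (hp : ∀ ω, 0 ≤ p ω)
    (I i₀ i : ℕ) (hi₀ : i₀ ≤ i) (hgap : i - i₀ < I)
    (η : ℕ → ℝ) (hηpos : ∀ j, 0 < η j)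
    (hηmono : ∀ j j', j ≤ j' → η j' ≤ η j) (hη2 : η i₀ ≤ 2 * η i)
    (w : Fin K → ℕ → Ω → EuclideanSpace ℝ (Fin d))
    (g : Fin K → ℕ → Ω → EuclideanSpace ℝ (Fin d))
    (wbar0 : EuclideanSpace ℝ (Fin d))
    (hsync : ∀ k ω, w k i₀ ω = wbar0)
    (hupdate : ∀ k ω, ∀ j, i₀ ≤ j → j < i →
      w k (j + 1) ω = w k j ω - η j • g k j ω)
    (H : ℝ)
    (hgrad : ∀ k j, ∑ ω, p ω * ‖g k j ω‖ ^ 2 ≤ H ^ 2)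
    (s : Fin K → ℝ) (hs : ∀ k, 0 ≤ s k) (hssum : ∑ k, s k = 1) :
    ∑ ω, p ω * ∑ k, s k * ‖(∑ k', s k' • w k' i ω) - w k i ω‖ ^ 2
      ≤ 4 * η i ^ 2 * ((I : ℝ) - 1) ^ 2 * H ^ 2 := by
  set T := Ico i₀ i
  have hT : (#T : ℝ) ≤ I - 1 := by
    rw [Nat.card_Ico, le_sub_iff_add_le]
    exact_mod_cast hgap
  have hη : ∀ j ∈ T, ‖η j‖ ≤ 2 * η i := fun j hj => by
    rw [Real.norm_of_nonneg (hηpos j).le]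
    exact (hηmono _ _ (mem_Ico.1 hj).1).trans hη2
  have hdrift : ∀ ω k, ∑ k', s k' • w k' i ω - w k i ω
      = ∑ j ∈ T, η j • g k j ω - ∑ k', s k' • ∑ j ∈ T, η j • g k' j ω := fun ω =>
    sum_smul_sub_eq_sub_sum_smul hssum fun k => by
      rw [eq_sub_sum_Ico_of_forall_succ_eq_sub (x := (w k · ω)) (hupdate k ω) hi₀ le_rfl, hsync]
  have hpointwise : ∀ ω, ∑ k, s k * ‖∑ k', s k' • w k' i ω - w k i ω‖ ^ 2
      ≤ #T * (2 * η i) ^ 2 * ∑ k, s k * ∑ j ∈ T, ‖g k j ω‖ ^ 2 := fun ω => by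
    rw [mul_sum]
    simp only [hdrift ω, mul_left_comm _ (s _)]
    refine (sum_mul_norm_sub_sum_smul_sq_le hssum _).trans (sum_le_sum fun k _ => ?_)
    exact mul_le_mul_of_nonneg_left (norm_sum_smul_sq_le T _ _ hη) (hs k)
  calc ∑ ω, p ω * ∑ k, s k * ‖∑ k', s k' • w k' i ω - w k i ω‖ ^ 2
      ≤ #T * (2 * η i) ^ 2 * ∑ ω, p ω * ∑ k, s k * ∑ j ∈ T, ‖g k j ω‖ ^ 2 := by
        rw [mul_sum]
        simp only [mul_left_comm _ (p _)]
        exact sum_le_sum fun ω _ => mul_le_mul_of_nonneg_left (hpointwise ω) (hp ω)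
    _ ≤ #T * (2 * η i) ^ 2 * (#T * H ^ 2) := by
        gcongr
        exact sum_mul_sum_mul_sum_le_card_mul p hs hssum T _ hgrad
    _ = 4 * η i ^ 2 * (#T : ℝ) ^ 2 * H ^ 2 := by ring
    _ ≤ 4 * η i ^ 2 * ((I : ℝ) - 1) ^ 2 * H ^ 2 := by gcongr

/-- Bounded client drift over local SGD steps between
synchronizations. Randomness is modeled by a finite probability space `Ω`. -/
theorem bounded_client_drift
    {d K : ℕ} {Ω : Type*} [Fintype Ω]
    (p : Ω → ℝ) (hp : ∀ ω, 0 ≤ p ω) (hpsum : ∑ ω, p ω = 1)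
    (I i₀ i : ℕ) (hI : 1 ≤ I) (hi₀ : i₀ ≤ i) (hgap : i - i₀ < I)
    (η : ℕ → ℝ) (hηpos : ∀ j, 0 < η j)
    (hηmono : ∀ j j', j ≤ j' → η j' ≤ η j) (hη2 : η i₀ ≤ 2 * η i)
    (w : Fin K → ℕ → Ω → EuclideanSpace ℝ (Fin d))
    (g : Fin K → ℕ → Ω → EuclideanSpace ℝ (Fin d))
    (wbar0 : EuclideanSpace ℝ (Fin d))
    (hsync : ∀ k ω, w k i₀ ω = wbar0)
    (hupdate : ∀ k ω, ∀ j, i₀ ≤ j → j < i →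
      w k (j + 1) ω = w k j ω - η j • g k j ω)
    (H : ℝ)
    (hgrad : ∀ k j, ∑ ω, p ω * ‖g k j ω‖ ^ 2 ≤ H ^ 2)
    (s : Fin K → ℝ) (hs : ∀ k, 0 ≤ s k) (hssum : ∑ k, s k = 1) :
    ∑ ω, p ω * ∑ k, s k * ‖(∑ k', s k' • w k' i ω) - w k i ω‖ ^ 2
      ≤ 4 * η i ^ 2 * ((I : ℝ) - 1) ^ 2 * H ^ 2 :=
  bounded_client_drift_general p hp I i₀ i hi₀ hgap η hηpos hηmono hη2 w g wbar0 hsync hupdate H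
    hgrad s hs hssum
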